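/- Limiting variance of the adaptive-smoothing estimator: define D_ad(x) := 1{τ(x)>0} + π₁(x)·1{τ(x)=0}. Under homoscedasticity, Var(ψ(D_ad, π₁, (μ₁,μ₀))) = Var(d₀(X)·μ₁(X)+(1−d₀(X))·μ₀(X)) + E[σ²(X)·(1{τ(X)>0}/π₁(X) + 1{τ(X)<0}/(1−π₁(X)))] + E[σ²(X)·1{τ(X)=0}]. -/

import Mathlib

/-! With `A ∈ {0, 1}` the AIPW score splits as `V(X) + W`, where `V = D μ₁ + (1 - D) μ₀` and
`W = (D / π₁)(X) · A (Y - μ₁(X)) + ((1 - D) / (1 - π₁))(X) · (1 - A) (Y - μ₀(X))`.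
Both residuals have conditional mean zero given `X`, so `W` is uncorrelated with `V(X)` and
`Var ψ = Var V(X) + E[W²]`; since `A (1 - A) = 0`,
`E[W² | X] = D² σ₁² / π₁ + (1 - D)² σ₀² / (1 - π₁)`.
For the adaptive rule, `V` is the value of `d₀` because `μ₁ = μ₀` wherever `D_ad` is fractional,
and `D² / π₁ + (1 - D)² / (1 - π₁)` is `1 / π₁`, `1 / (1 - π₁)` or `π₁ + (1 - π₁) = 1`
according to the sign of `τ`. -/

open MeasureTheory ProbabilityTheory Filter Topology
open scoped Classical

/-- AIPW score `ψ(D, p, (m₁, m₀))` evaluated at a sample point `ω`. -/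
noncomputable def aipw {Ω 𝒳 : Type*} (X : Ω → 𝒳) (A Y : Ω → ℝ)
    (D p m₁ m₀ : 𝒳 → ℝ) (ω : Ω) : ℝ :=
  (A ω * D (X ω) + (1 - A ω) * (1 - D (X ω))) /
      (A ω * p (X ω) + (1 - A ω) * (1 - p (X ω))) *
    (Y ω - (A ω * m₁ (X ω) + (1 - A ω) * m₀ (X ω)))
  + D (X ω) * m₁ (X ω) + (1 - D (X ω)) * m₀ (X ω)

open scoped ENNReal

theorem abs_div_le_one_div {a b c : ℝ} (hc : 0 < c) (ha : a ∈ Set.Icc (0 : ℝ) 1)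
    (hb : c ≤ b) : |a / b| ≤ 1 / c := by
  rw [abs_of_nonneg (div_nonneg ha.1 (hc.trans_le hb).le)]
  calc a / b ≤ 1 / b := div_le_div_of_nonneg_right ha.2 (hc.trans_le hb).le
    _ ≤ 1 / c := one_div_le_one_div_of_le hc hb

section AdaptiveRule

variable {t p D : ℝ}

theorem adaptiveRule_mem_Icc (hp : p ∈ Set.Icc (0 : ℝ) 1)
    (hD : D = (if 0 < t then 1 else 0) + p * (if t = 0 then 1 else 0)) :
    D ∈ Set.Icc (0 : ℝ) 1 := by
  subst hD
  rcases lt_trichotomy t 0 with h | rfl | h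
  · simp [h.not_gt, h.ne]
  · simpa using hp
  · simp [h, h.ne']

theorem adaptiveRule_value {a b : ℝ}
    (hD : D = (if 0 < a - b then 1 else 0) + p * (if a - b = 0 then 1 else 0)) :
    D * a + (1 - D) * b
      = (if 0 < a - b then 1 else 0) * a + (1 - if 0 < a - b then 1 else 0) * b := by
  subst hD
  rcases lt_trichotomy (a - b) 0 with h | h | h
  · simp [h.not_gt, h.ne]
  · obtain rfl : a = b := by linarith
    simp only [sub_self, lt_self_iff_false, ↓reduceIte, mul_one, zero_add, zero_mul, sub_zero,
      one_mul]
    ring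
  · simp [h, h.ne']

theorem adaptiveRule_weight (hp : p ∈ Set.Ioo (0 : ℝ) 1)
    (hD : D = (if 0 < t then 1 else 0) + p * (if t = 0 then 1 else 0)) :
    D ^ 2 / p + (1 - D) ^ 2 / (1 - p)
      = (if 0 < t then 1 else 0) / p + (if t < 0 then 1 else 0) / (1 - p)
        + (if t = 0 then 1 else 0) := by
  have hp0 : p ≠ 0 := hp.1.ne'
  have hp1 : 1 - p ≠ 0 := (sub_pos.2 hp.2).ne'
  subst hD
  rcases lt_trichotomy t 0 with h | rfl | h
  · simp [h, h.not_gt, h.ne]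
  · simp only [lt_self_iff_false, ↓reduceIte, mul_one, zero_add, zero_div, add_zero]
    field_simp
    ring
  · simp [h, h.not_gt, h.ne']

theorem abs_ite_div_add_ite_div_le {c : ℝ} (hc : 0 < c) (hp : p ∈ Set.Icc c (1 - c)) :
    |(if 0 < t then 1 else 0) / p + (if t < 0 then 1 else 0) / (1 - p)| ≤ 1 / c := by
  have h1 : |1 / p| ≤ 1 / c := abs_div_le_one_div hc (by simp) hp.1
  have h0 : |1 / (1 - p)| ≤ 1 / c := abs_div_le_one_div hc (by simp) (by linarith [hp.2])
  rcases lt_trichotomy t 0 with h | rfl | h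
  · simpa [h, h.not_gt] using h0
  · simpa using hc.le
  · simpa [h, h.not_gt] using h1

end AdaptiveRule

section CondExp

variable {Ω : Type*} {m mΩ : MeasurableSpace Ω} {P : Measure Ω} {B Y μ p s : Ω → ℝ}

theorem condExp_one_sub [IsFiniteMeasure P] (hm : m ≤ mΩ) (hB : Integrable B P)
    (hcB : P[B|m] =ᵐ[P] p) :
    P[fun ω => 1 - B ω|m] =ᵐ[P] fun ω => 1 - p ω := by
  filter_upwards [condExp_sub (integrable_const 1) hB m, hcB] with ω h e
  rw [show (fun ω => 1 - B ω) = (fun _ => (1 : ℝ)) - B from rfl, h, Pi.sub_apply, e,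
    condExp_const hm]

theorem condExp_mul_sub_eq_zero [IsFiniteMeasure P] (hB : MemLp B ∞ P) (hY : MemLp Y 2 P)
    (hμ : MemLp μ 2 P) (hμm : StronglyMeasurable[m] μ) (hcB : P[B|m] =ᵐ[P] p)
    (hcBY : P[fun ω => B ω * Y ω|m] =ᵐ[P] fun ω => μ ω * p ω) :
    P[fun ω => B ω * (Y ω - μ ω)|m] =ᵐ[P] 0 := by
  have hB2 : MemLp B 2 P := hB.mono_exponent le_top
  have hsplit : (fun ω => B ω * (Y ω - μ ω)) = (fun ω => B ω * Y ω) - μ * B := by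
    ext ω; simp only [Pi.sub_apply, Pi.mul_apply]; ring
  have hμB : P[μ * B|m] =ᵐ[P] μ * P[B|m] :=
    condExp_mul_of_stronglyMeasurable_left hμm (hμ.integrable_mul hB2)
      (hB2.integrable one_le_two)
  rw [hsplit]
  filter_upwards [condExp_sub ((hY.mul' hB).integrable one_le_two) (hμ.integrable_mul hB2) m,
    hcBY, hμB, hcB] with ω h e₁ e₂ e₃
  simp only [h, Pi.sub_apply, e₁, e₂, Pi.mul_apply, e₃, Pi.zero_apply, sub_self]

theorem condExp_mul_sub_sq_eq [IsFiniteMeasure P] (hB : MemLp B ∞ P) (hY : MemLp Y 2 P)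
    (hμ : MemLp μ 2 P) (hμm : StronglyMeasurable[m] μ) (hcB : P[B|m] =ᵐ[P] p)
    (hcBY : P[fun ω => B ω * Y ω|m] =ᵐ[P] fun ω => μ ω * p ω)
    (hcBY2 : P[fun ω => B ω * Y ω ^ 2|m] =ᵐ[P] fun ω => (μ ω ^ 2 + s ω) * p ω) :
    P[fun ω => B ω * (Y ω - μ ω) ^ 2|m] =ᵐ[P] fun ω => s ω * p ω := by
  have hB2 : MemLp B 2 P := hB.mono_exponent le_top
  have hBY : MemLp (fun ω => B ω * Y ω) 2 P := hY.mul' hB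
  have hsplit : (fun ω => B ω * (Y ω - μ ω) ^ 2)
      = (fun ω => B ω * Y ω ^ 2) - (2 * μ) * (fun ω => B ω * Y ω) + μ ^ 2 * B := by
    ext ω; simp only [Pi.add_apply, Pi.sub_apply, Pi.mul_apply, Pi.pow_apply, Pi.ofNat_apply]
    ring
  have hBY2 : Integrable (fun ω => B ω * Y ω ^ 2) P := hY.integrable_sq.mul_of_top_right hB
  have hμBY : Integrable ((2 * μ) * fun ω => B ω * Y ω) P :=
    (hμ.const_mul 2).integrable_mul hBY
  have hμ2B : Integrable (μ ^ 2 * B) P := hμ.integrable_sq.mul_of_top_left hB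
  have h2μm : StronglyMeasurable[m] (2 * μ) := stronglyMeasurable_const.mul hμm
  filter_upwards [condExp_add (hBY2.sub hμBY) hμ2B m, condExp_sub hBY2 hμBY m,
    condExp_mul_of_stronglyMeasurable_left h2μm hμBY (hBY.integrable one_le_two),
    condExp_mul_of_stronglyMeasurable_left (hμm.pow 2) hμ2B (hB2.integrable one_le_two),
    hcB, hcBY, hcBY2] with ω h₁ h₂ h₃ h₄ e₁ e₂ e₃
  rw [hsplit, h₁, Pi.add_apply, h₂]
  simp only [Pi.sub_apply, h₃, h₄, Pi.mul_apply, e₁, e₂, e₃, Pi.pow_apply, Pi.ofNat_apply]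
  ring

theorem condExp_mul_add_mul_of_bound (hm : m ≤ mΩ) {f g Z W k l : Ω → ℝ}
    (hf : StronglyMeasurable[m] f) (hg : StronglyMeasurable[m] g) {C : ℝ}
    (hfC : ∀ ω, |f ω| ≤ C) (hgC : ∀ ω, |g ω| ≤ C) (hZ : Integrable Z P) (hW : Integrable W P)
    (hk : P[Z|m] =ᵐ[P] k) (hl : P[W|m] =ᵐ[P] l) :
    P[fun ω => f ω * Z ω + g ω * W ω|m] =ᵐ[P] fun ω => f ω * k ω + g ω * l ω := by
  have hfZ : Integrable (f * Z) P :=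
    hZ.bdd_mul (hf.mono hm).aestronglyMeasurable (ae_of_all _ hfC)
  have hgW : Integrable (g * W) P :=
    hW.bdd_mul (hg.mono hm).aestronglyMeasurable (ae_of_all _ hgC)
  filter_upwards [condExp_add hfZ hgW m, condExp_mul_of_stronglyMeasurable_left hf hfZ hZ,
    condExp_mul_of_stronglyMeasurable_left hg hgW hW, hk, hl] with ω h e₁ e₂ e₃ e₄
  rw [show (fun ω => f ω * Z ω + g ω * W ω) = f * Z + g * W from rfl, h, Pi.add_apply, e₁, e₂,
    Pi.mul_apply, Pi.mul_apply, e₃, e₄]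

theorem variance_add_of_condExp_eq_zero [IsProbabilityMeasure P] (hm : m ≤ mΩ) {V W : Ω → ℝ}
    (hV : MemLp V 2 P) (hVm : StronglyMeasurable[m] V) (hW : MemLp W 2 P)
    (hcW : P[W|m] =ᵐ[P] 0) :
    variance (V + W) P = variance V P + ∫ ω, W ω ^ 2 ∂P := by
  have hEW : P[W] = 0 := by
    rw [← integral_condExp hm, integral_congr_ae hcW, integral_zero']
  have hEVW : P[V * W] = 0 := by
    rw [← integral_condExp hm,
      integral_congr_ae (condExp_mul_of_stronglyMeasurable_left hVm (hV.integrable_mul hW)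
        (hW.integrable one_le_two))]
    refine integral_eq_zero_of_ae ?_
    filter_upwards [hcW] with ω h
    simp [h]
  rw [variance_add hV hW, covariance_eq_sub hV hW, variance_eq_sub hW, hEW, hEVW]
  simp

end CondExp

section IpwResidual

variable {Ω : Type*} {m mΩ : MeasurableSpace Ω} {P : Measure Ω}
  {A Y μ₁ μ₀ p s₁ s₀ f₁ f₀ : Ω → ℝ}

def ipwResidual (A Y μ₁ μ₀ f₁ f₀ : Ω → ℝ) (ω : Ω) : ℝ :=
  f₁ ω * (A ω * (Y ω - μ₁ ω)) + f₀ ω * ((1 - A ω) * (Y ω - μ₀ ω))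

theorem aipw_eq_add_ipwResidual {𝒳 : Type*} {X : Ω → 𝒳} {D π m₁ m₀ : 𝒳 → ℝ}
    (hA : ∀ ω, A ω = 0 ∨ A ω = 1) :
    aipw X A Y D π m₁ m₀ = (fun ω => D (X ω) * m₁ (X ω) + (1 - D (X ω)) * m₀ (X ω))
      + ipwResidual A Y (fun ω => m₁ (X ω)) (fun ω => m₀ (X ω))
          (fun ω => D (X ω) / π (X ω)) (fun ω => (1 - D (X ω)) / (1 - π (X ω))) := by
  ext ω
  rcases hA ω with h | h <;> simp only [aipw, ipwResidual, Pi.add_apply, h] <;> ring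

theorem ipwResidual_sq (hA : ∀ ω, A ω = 0 ∨ A ω = 1) (ω : Ω) :
    ipwResidual A Y μ₁ μ₀ f₁ f₀ ω ^ 2
      = f₁ ω ^ 2 * (A ω * (Y ω - μ₁ ω) ^ 2) + f₀ ω ^ 2 * ((1 - A ω) * (Y ω - μ₀ ω) ^ 2) := by
  rcases hA ω with h | h <;> simp only [ipwResidual, h] <;> ring

theorem memLp_ipwResidual [IsFiniteMeasure P] (hA : MemLp A ∞ P) (hY : MemLp Y 2 P)
    (hμ₁ : MemLp μ₁ 2 P) (hμ₀ : MemLp μ₀ 2 P) (hf₁ : MemLp f₁ ∞ P) (hf₀ : MemLp f₀ ∞ P) :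
    MemLp (ipwResidual A Y μ₁ μ₀ f₁ f₀) 2 P :=
  have hR : ∀ {B μ f : Ω → ℝ}, MemLp B ∞ P → MemLp μ 2 P → MemLp f ∞ P →
      MemLp (fun ω => f ω * (B ω * (Y ω - μ ω))) 2 P :=
    fun hB hμ hf => ((hY.sub hμ).mul' hB (r := 2)).mul' hf
  (hR hA hμ₁ hf₁).add (hR ((memLp_const 1).sub hA) hμ₀ hf₀)

theorem condExp_ipwResidual [IsFiniteMeasure P] (hm : m ≤ mΩ) (hA : MemLp A ∞ P)
    (hY : MemLp Y 2 P) (hμ₁ : MemLp μ₁ 2 P) (hμ₀ : MemLp μ₀ 2 P)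
    (hμ₁m : StronglyMeasurable[m] μ₁) (hμ₀m : StronglyMeasurable[m] μ₀)
    (hf₁ : StronglyMeasurable[m] f₁) (hf₀ : StronglyMeasurable[m] f₀) {C : ℝ}
    (hf₁C : ∀ ω, |f₁ ω| ≤ C) (hf₀C : ∀ ω, |f₀ ω| ≤ C) (hcA : P[A|m] =ᵐ[P] p)
    (hcY₁ : P[fun ω => A ω * Y ω|m] =ᵐ[P] fun ω => μ₁ ω * p ω)
    (hcY₀ : P[fun ω => (1 - A ω) * Y ω|m] =ᵐ[P] fun ω => μ₀ ω * (1 - p ω)) :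
    P[ipwResidual A Y μ₁ μ₀ f₁ f₀|m] =ᵐ[P] 0 := by
  have hA₀ : MemLp (fun ω => 1 - A ω) ∞ P := (memLp_const 1).sub hA
  refine (condExp_mul_add_mul_of_bound hm hf₁ hf₀ hf₁C hf₀C
    (((hY.sub hμ₁).mul' hA).integrable one_le_two)
    (((hY.sub hμ₀).mul' hA₀).integrable one_le_two)
    (condExp_mul_sub_eq_zero hA hY hμ₁ hμ₁m hcA hcY₁)
    (condExp_mul_sub_eq_zero hA₀ hY hμ₀ hμ₀m (condExp_one_sub hm (hA.integrable le_top) hcA)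
      hcY₀)).trans (ae_of_all _ fun ω => ?_)
  simp

theorem condExp_ipwResidual_sq [IsFiniteMeasure P] (hm : m ≤ mΩ) (hA : MemLp A ∞ P)
    (hAbin : ∀ ω, A ω = 0 ∨ A ω = 1) (hY : MemLp Y 2 P) (hμ₁ : MemLp μ₁ 2 P) (hμ₀ : MemLp μ₀ 2 P)
    (hμ₁m : StronglyMeasurable[m] μ₁) (hμ₀m : StronglyMeasurable[m] μ₀)
    (hf₁ : StronglyMeasurable[m] f₁) (hf₀ : StronglyMeasurable[m] f₀) {C : ℝ}
    (hf₁C : ∀ ω, |f₁ ω| ≤ C) (hf₀C : ∀ ω, |f₀ ω| ≤ C) (hcA : P[A|m] =ᵐ[P] p)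
    (hcY₁ : P[fun ω => A ω * Y ω|m] =ᵐ[P] fun ω => μ₁ ω * p ω)
    (hcY₀ : P[fun ω => (1 - A ω) * Y ω|m] =ᵐ[P] fun ω => μ₀ ω * (1 - p ω))
    (hcYsq₁ : P[fun ω => A ω * Y ω ^ 2|m] =ᵐ[P] fun ω => (μ₁ ω ^ 2 + s₁ ω) * p ω)
    (hcYsq₀ : P[fun ω => (1 - A ω) * Y ω ^ 2|m]
      =ᵐ[P] fun ω => (μ₀ ω ^ 2 + s₀ ω) * (1 - p ω)) :
    P[fun ω => ipwResidual A Y μ₁ μ₀ f₁ f₀ ω ^ 2|m]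
      =ᵐ[P] fun ω => f₁ ω ^ 2 * (s₁ ω * p ω) + f₀ ω ^ 2 * (s₀ ω * (1 - p ω)) := by
  have hA₀ : MemLp (fun ω => 1 - A ω) ∞ P := (memLp_const 1).sub hA
  have hsq : ∀ {f : Ω → ℝ}, (∀ ω, |f ω| ≤ C) → ∀ ω, |f ω ^ 2| ≤ C ^ 2 := fun hfC ω => by
    rw [abs_pow]; exact pow_le_pow_left₀ (abs_nonneg _) (hfC ω) 2
  simp_rw [ipwResidual_sq hAbin]
  exact condExp_mul_add_mul_of_bound hm (hf₁.pow 2) (hf₀.pow 2) (hsq hf₁C) (hsq hf₀C)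
    ((hY.sub hμ₁).integrable_sq.mul_of_top_right hA)
    ((hY.sub hμ₀).integrable_sq.mul_of_top_right hA₀)
    (condExp_mul_sub_sq_eq hA hY hμ₁ hμ₁m hcA hcY₁ hcYsq₁)
    (condExp_mul_sub_sq_eq hA₀ hY hμ₀ hμ₀m (condExp_one_sub hm (hA.integrable le_top) hcA)
      hcY₀ hcYsq₀)

end IpwResidual

theorem variance_aipw {Ω 𝒳 : Type*} [MeasurableSpace Ω] [MeasurableSpace 𝒳] {P : Measure Ω}
    [IsProbabilityMeasure P] {X : Ω → 𝒳} {A Y : Ω → ℝ} {c : ℝ} {D π μ₁ μ₀ σ₁ σ₀ : 𝒳 → ℝ}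
    (hX : Measurable X) (hA : Measurable A) (hAbin : ∀ ω, A ω = 0 ∨ A ω = 1)
    (hY : MemLp Y 2 P) (hc : 0 < c) (hπm : Measurable π) (hπ : ∀ x, π x ∈ Set.Icc c (1 - c))
    (hDm : Measurable D) (hD : ∀ x, D x ∈ Set.Icc (0 : ℝ) 1)
    (hμ₁m : Measurable μ₁) (hμ₀m : Measurable μ₀)
    (hμ₁ : MemLp (fun ω => μ₁ (X ω)) 2 P) (hμ₀ : MemLp (fun ω => μ₀ (X ω)) 2 P)
    (hcA : P[A | MeasurableSpace.comap X inferInstance] =ᵐ[P] fun ω => π (X ω))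
    (hcY₁ : P[fun ω => A ω * Y ω | MeasurableSpace.comap X inferInstance]
      =ᵐ[P] fun ω => μ₁ (X ω) * π (X ω))
    (hcY₀ : P[fun ω => (1 - A ω) * Y ω | MeasurableSpace.comap X inferInstance]
      =ᵐ[P] fun ω => μ₀ (X ω) * (1 - π (X ω)))
    (hcYsq₁ : P[fun ω => A ω * Y ω ^ 2 | MeasurableSpace.comap X inferInstance]
      =ᵐ[P] fun ω => (μ₁ (X ω) ^ 2 + σ₁ (X ω)) * π (X ω))
    (hcYsq₀ : P[fun ω => (1 - A ω) * Y ω ^ 2 | MeasurableSpace.comap X inferInstance]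
      =ᵐ[P] fun ω => (μ₀ (X ω) ^ 2 + σ₀ (X ω)) * (1 - π (X ω))) :
    variance (aipw X A Y D π μ₁ μ₀) P
      = variance (fun ω => D (X ω) * μ₁ (X ω) + (1 - D (X ω)) * μ₀ (X ω)) P
        + ∫ ω, (D (X ω) ^ 2 * σ₁ (X ω) / π (X ω)
            + (1 - D (X ω)) ^ 2 * σ₀ (X ω) / (1 - π (X ω))) ∂P := by
  have hm := hX.comap_le
  have hXm : ∀ {h : 𝒳 → ℝ}, Measurable h →
      StronglyMeasurable[MeasurableSpace.comap X inferInstance] fun ω => h (X ω) :=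
    fun hh => (hh.comp (comap_measurable X)).stronglyMeasurable
  have hF₁ x : |D x / π x| ≤ 1 / c := abs_div_le_one_div hc (hD x) (hπ x).1
  have hF₀ x : |(1 - D x) / (1 - π x)| ≤ 1 / c :=
    abs_div_le_one_div hc ⟨by linarith [(hD x).2], by linarith [(hD x).1]⟩
      (by linarith [(hπ x).2])
  have hF₁m : StronglyMeasurable[MeasurableSpace.comap X inferInstance]
      fun ω => D (X ω) / π (X ω) := hXm (hDm.div hπm)
  have hF₀m : StronglyMeasurable[MeasurableSpace.comap X inferInstance]
      fun ω => (1 - D (X ω)) / (1 - π (X ω)) :=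
    hXm ((measurable_const.sub hDm).div (measurable_const.sub hπm))
  have hAbdd : MemLp A ∞ P := memLp_top_of_bound hA.aestronglyMeasurable 1
    (ae_of_all _ fun ω => by rcases hAbin ω with h | h <;> simp [h])
  have hDbdd : MemLp (fun ω => D (X ω)) ∞ P := memLp_top_of_bound
    (hDm.comp hX).aestronglyMeasurable 1
    (ae_of_all _ fun ω => abs_le.2 ⟨by linarith [(hD (X ω)).1], (hD (X ω)).2⟩)
  have hV : MemLp (fun ω => D (X ω) * μ₁ (X ω) + (1 - D (X ω)) * μ₀ (X ω)) 2 P :=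
    (hμ₁.mul' hDbdd).add (hμ₀.mul' ((memLp_const 1).sub hDbdd))
  rw [aipw_eq_add_ipwResidual hAbin, variance_add_of_condExp_eq_zero hm hV
      (hXm ((hDm.mul hμ₁m).add ((measurable_const.sub hDm).mul hμ₀m)))
      (memLp_ipwResidual hAbdd hY hμ₁ hμ₀
        (memLp_top_of_bound (hF₁m.mono hm).aestronglyMeasurable _
          (ae_of_all _ fun ω => hF₁ (X ω)))
        (memLp_top_of_bound (hF₀m.mono hm).aestronglyMeasurable _
          (ae_of_all _ fun ω => hF₀ (X ω))))
      (condExp_ipwResidual hm hAbdd hY hμ₁ hμ₀ (hXm hμ₁m) (hXm hμ₀m) hF₁m hF₀m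
        (fun ω => hF₁ (X ω)) (fun ω => hF₀ (X ω)) hcA hcY₁ hcY₀),
    ← integral_condExp hm]
  refine congrArg (_ + ·) (integral_congr_ae ?_)
  filter_upwards [condExp_ipwResidual_sq hm hAbdd hAbin hY hμ₁ hμ₀ (hXm hμ₁m) (hXm hμ₀m)
    hF₁m hF₀m (fun ω => hF₁ (X ω)) (fun ω => hF₀ (X ω)) hcA hcY₁ hcY₀ hcYsq₁ hcYsq₀] with ω h
  have hπ₀ : π (X ω) ≠ 0 := (hc.trans_le (hπ (X ω)).1).ne'
  have hπ₁ : 1 - π (X ω) ≠ 0 := by linarith [(hπ (X ω)).2]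
  rw [h]
  field_simp

theorem stmt_11_general {Ω 𝒳 : Type*} [MeasurableSpace Ω] [MeasurableSpace 𝒳]
    (P : Measure Ω) [IsProbabilityMeasure P]
    (X : Ω → 𝒳) (A Y : Ω → ℝ)
    (hX : Measurable X) (hA : Measurable A)
    (hAbin : ∀ ω, A ω = 0 ∨ A ω = 1) (hYL2 : MemLp Y 2 P)
    (c : ℝ) (hc : c ∈ Set.Ioo (0 : ℝ) (1 / 2))
    (π₁ : 𝒳 → ℝ) (hπ₁m : Measurable π₁) (hπ₁r : ∀ x, π₁ x ∈ Set.Icc c (1 - c))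
    (hcondA : P[A | MeasurableSpace.comap X inferInstance]
      =ᵐ[P] fun ω => π₁ (X ω))
    (μ₁ μ₀ : 𝒳 → ℝ) (hμ₁m : Measurable μ₁) (hμ₀m : Measurable μ₀)
    (hμ₁L2 : MemLp (fun ω => μ₁ (X ω)) 2 P) (hμ₀L2 : MemLp (fun ω => μ₀ (X ω)) 2 P)
    (hcond1 : P[fun ω => A ω * Y ω | MeasurableSpace.comap X inferInstance]
      =ᵐ[P] fun ω => μ₁ (X ω) * π₁ (X ω))
    (hcond0 : P[fun ω => (1 - A ω) * Y ω | MeasurableSpace.comap X inferInstance]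
      =ᵐ[P] fun ω => μ₀ (X ω) * (1 - π₁ (X ω)))
    (σ₁sq σ₀sq : 𝒳 → ℝ)
    (hσ₁L1 : Integrable (fun ω => σ₁sq (X ω)) P)
    (hcondsq1 : P[fun ω => A ω * Y ω ^ 2 | MeasurableSpace.comap X inferInstance]
      =ᵐ[P] fun ω => (μ₁ (X ω) ^ 2 + σ₁sq (X ω)) * π₁ (X ω))
    (hcondsq0 : P[fun ω => (1 - A ω) * Y ω ^ 2 | MeasurableSpace.comap X inferInstance]
      =ᵐ[P] fun ω => (μ₀ (X ω) ^ 2 + σ₀sq (X ω)) * (1 - π₁ (X ω)))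
    (σsq : 𝒳 → ℝ)
    (hhomo1 : (fun x => σ₁sq x) =ᵐ[Measure.map X P] σsq)
    (hhomo0 : (fun x => σ₀sq x) =ᵐ[Measure.map X P] σsq)
    (Dad : 𝒳 → ℝ)
    (hDad : ∀ x, Dad x = (if 0 < μ₁ x - μ₀ x then (1 : ℝ) else 0)
      + π₁ x * (if μ₁ x - μ₀ x = 0 then (1 : ℝ) else 0))
    (d₀ : 𝒳 → ℝ) (hd₀ : ∀ x, d₀ x = if 0 < μ₁ x - μ₀ x then (1 : ℝ) else 0) :
    variance (aipw X A Y Dad π₁ μ₁ μ₀) P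
      = variance (fun ω => d₀ (X ω) * μ₁ (X ω) + (1 - d₀ (X ω)) * μ₀ (X ω)) P
        + ∫ ω, σsq (X ω) * ((if 0 < μ₁ (X ω) - μ₀ (X ω) then (1 : ℝ) else 0) / π₁ (X ω)
            + (if μ₁ (X ω) - μ₀ (X ω) < 0 then (1 : ℝ) else 0) / (1 - π₁ (X ω))) ∂P
        + ∫ ω, σsq (X ω) * (if μ₁ (X ω) - μ₀ (X ω) = 0 then (1 : ℝ) else 0) ∂P := by
  have hτ : Measurable fun x => μ₁ x - μ₀ x := hμ₁m.sub hμ₀m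
  have hpos : Measurable fun x => if 0 < μ₁ x - μ₀ x then (1 : ℝ) else 0 :=
    .ite (measurableSet_lt measurable_const hτ) measurable_const measurable_const
  have hneg : Measurable fun x => if μ₁ x - μ₀ x < 0 then (1 : ℝ) else 0 :=
    .ite (measurableSet_lt hτ measurable_const) measurable_const measurable_const
  have hzero : Measurable fun x => if μ₁ x - μ₀ x = 0 then (1 : ℝ) else 0 :=
    .ite (hτ (measurableSet_singleton 0)) measurable_const measurable_const
  have hπ x : π₁ x ∈ Set.Ioo (0 : ℝ) 1 :=
    ⟨hc.1.trans_le (hπ₁r x).1, by linarith [(hπ₁r x).2, hc.1]⟩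
  have hDm : Measurable Dad := by rw [funext hDad]; exact hpos.add (hπ₁m.mul hzero)
  have hvalue : (fun ω => Dad (X ω) * μ₁ (X ω) + (1 - Dad (X ω)) * μ₀ (X ω))
      = fun ω => d₀ (X ω) * μ₁ (X ω) + (1 - d₀ (X ω)) * μ₀ (X ω) :=
    funext fun ω => by rw [hd₀, adaptiveRule_value (hDad _)]
  have hσ : Integrable (fun ω => σsq (X ω)) P :=
    hσ₁L1.congr (ae_of_ae_map hX.aemeasurable hhomo1)
  rw [variance_aipw hX hA hAbin hYL2 hc.1 hπ₁m hπ₁r hDm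
      (fun x => adaptiveRule_mem_Icc (Set.Ioo_subset_Icc_self (hπ x)) (hDad x)) hμ₁m hμ₀m
      hμ₁L2 hμ₀L2 hcondA hcond1 hcond0 hcondsq1 hcondsq0,
    hvalue, add_assoc, ← integral_add ?_ ?_]
  · refine congrArg (_ + ·) (integral_congr_ae ?_)
    filter_upwards [ae_of_ae_map hX.aemeasurable hhomo1, ae_of_ae_map hX.aemeasurable hhomo0]
      with ω h₁ h₀
    rw [h₁, h₀]
    linear_combination σsq (X ω) * adaptiveRule_weight (hπ (X ω)) (hDad (X ω))
  · exact hσ.mul_bdd (((hpos.div hπ₁m).add (hneg.div (measurable_const.sub hπ₁m))).comp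
      hX).aestronglyMeasurable (ae_of_all _ fun ω => abs_ite_div_add_ite_div_le hc.1 (hπ₁r _))
  · exact hσ.mul_bdd (hzero.comp hX).aestronglyMeasurable
      (ae_of_all _ fun ω => show |_| ≤ 1 by split_ifs <;> simp)

/-- Limiting variance of the adaptive-smoothing estimator: define
`D_ad(x) := 1{τ(x)>0} + π₁(x)·1{τ(x)=0}` with `τ = μ₁ − μ₀`. Under homoscedasticity
(`σ₁² = σ₀² = σ²` a.e. under the law of `X`),
`Var(ψ(D_ad, π₁, (μ₁,μ₀))) = Var(d₀(X)μ₁(X)+(1−d₀(X))μ₀(X))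
 + E[σ²(X)·(1{τ(X)>0}/π₁(X) + 1{τ(X)<0}/(1−π₁(X)))] + E[σ²(X)·1{τ(X)=0}]`. -/
theorem stmt_11 {Ω 𝒳 : Type*} [MeasurableSpace Ω] [MeasurableSpace 𝒳]
    (P : Measure Ω) [IsProbabilityMeasure P]
    (X : Ω → 𝒳) (A Y : Ω → ℝ)
    (hX : Measurable X) (hA : Measurable A) (hY : Measurable Y)
    (hAbin : ∀ ω, A ω = 0 ∨ A ω = 1) (hYL2 : MemLp Y 2 P)
    (c : ℝ) (hc : c ∈ Set.Ioo (0 : ℝ) (1 / 2))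
    (π₁ : 𝒳 → ℝ) (hπ₁m : Measurable π₁) (hπ₁r : ∀ x, π₁ x ∈ Set.Icc c (1 - c))
    (hcondA : P[A | MeasurableSpace.comap X inferInstance]
      =ᵐ[P] fun ω => π₁ (X ω))
    (μ₁ μ₀ : 𝒳 → ℝ) (hμ₁m : Measurable μ₁) (hμ₀m : Measurable μ₀)
    (hμ₁L2 : MemLp (fun ω => μ₁ (X ω)) 2 P) (hμ₀L2 : MemLp (fun ω => μ₀ (X ω)) 2 P)
    (hcond1 : P[fun ω => A ω * Y ω | MeasurableSpace.comap X inferInstance]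
      =ᵐ[P] fun ω => μ₁ (X ω) * π₁ (X ω))
    (hcond0 : P[fun ω => (1 - A ω) * Y ω | MeasurableSpace.comap X inferInstance]
      =ᵐ[P] fun ω => μ₀ (X ω) * (1 - π₁ (X ω)))
    (σ₁sq σ₀sq : 𝒳 → ℝ) (hσ₁m : Measurable σ₁sq) (hσ₀m : Measurable σ₀sq)
    (hσ₁nn : ∀ x, 0 ≤ σ₁sq x) (hσ₀nn : ∀ x, 0 ≤ σ₀sq x)
    (hσ₁L1 : Integrable (fun ω => σ₁sq (X ω)) P)
    (hσ₀L1 : Integrable (fun ω => σ₀sq (X ω)) P)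
    (hcondsq1 : P[fun ω => A ω * Y ω ^ 2 | MeasurableSpace.comap X inferInstance]
      =ᵐ[P] fun ω => (μ₁ (X ω) ^ 2 + σ₁sq (X ω)) * π₁ (X ω))
    (hcondsq0 : P[fun ω => (1 - A ω) * Y ω ^ 2 | MeasurableSpace.comap X inferInstance]
      =ᵐ[P] fun ω => (μ₀ (X ω) ^ 2 + σ₀sq (X ω)) * (1 - π₁ (X ω)))
    (σsq : 𝒳 → ℝ) (hσm : Measurable σsq)
    (hhomo1 : (fun x => σ₁sq x) =ᵐ[Measure.map X P] σsq)
    (hhomo0 : (fun x => σ₀sq x) =ᵐ[Measure.map X P] σsq)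
    (Dad : 𝒳 → ℝ)
    (hDad : ∀ x, Dad x = (if 0 < μ₁ x - μ₀ x then (1 : ℝ) else 0)
      + π₁ x * (if μ₁ x - μ₀ x = 0 then (1 : ℝ) else 0))
    (d₀ : 𝒳 → ℝ) (hd₀ : ∀ x, d₀ x = if 0 < μ₁ x - μ₀ x then (1 : ℝ) else 0) :
    variance (aipw X A Y Dad π₁ μ₁ μ₀) P
      = variance (fun ω => d₀ (X ω) * μ₁ (X ω) + (1 - d₀ (X ω)) * μ₀ (X ω)) P
        + ∫ ω, σsq (X ω) * ((if 0 < μ₁ (X ω) - μ₀ (X ω) then (1 : ℝ) else 0) / π₁ (X ω)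
            + (if μ₁ (X ω) - μ₀ (X ω) < 0 then (1 : ℝ) else 0) / (1 - π₁ (X ω))) ∂P
        + ∫ ω, σsq (X ω) * (if μ₁ (X ω) - μ₀ (X ω) = 0 then (1 : ℝ) else 0) ∂P :=
  stmt_11_general P X A Y hX hA hAbin hYL2 c hc π₁ hπ₁m hπ₁r hcondA μ₁ μ₀ hμ₁m hμ₀m hμ₁L2 hμ₀L2
    hcond1 hcond0 σ₁sq σ₀sq hσ₁L1 hcondsq1 hcondsq0 σsq hhomo1 hhomo0 Dad hDad d₀ hd₀
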